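/- Fix M > 0 and let f(r) = 1 − 2M/r on U = {(t, r) : r > 2M}. Let l be a natural number with L = l(l+1), and let Φ, X, Y, T_t, T_r : U → ℝ be smooth and satisfy on U the three relations: (i) Φ = 2r ∂_r X − 4X − 2r ∂_t Y; (ii) (L−2) Y = (r/(2f)) ∂_t Φ + 16π r³ T_r; (iii) (L−2) X = (f/2)( r ∂_r Φ + Φ ) + 16π r³ T_t. Then Φ satisfies the master equation ∂_t²Φ − f ∂_r( f ∂_r Φ ) + (f/r²)( L − 3(1−f) ) Φ = 32π r f ( ∂_r( r T_t ) − r ∂_t T_r ) on U. -/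

import Mathlib

/-- Partial derivative with respect to the first coordinate `t`. -/
noncomputable def pdt (g : ℝ → ℝ → ℝ) : ℝ → ℝ → ℝ := fun t r => deriv (fun s => g s r) t
/-- Partial derivative with respect to the second coordinate `r`. -/
noncomputable def pdr (g : ℝ → ℝ → ℝ) : ℝ → ℝ → ℝ := fun t r => deriv (fun s => g t s) r

private lemma isOpen_S' (M : ℝ) : IsOpen {p : ℝ × ℝ | 2 * M < p.2} :=
  isOpen_Ioi.preimage continuous_snd

private lemma hasDerivAt_pdt' (M : ℝ) (g : ℝ → ℝ → ℝ)
    (hg : ContDiffOn ℝ (⊤ : ℕ∞) (fun p : ℝ × ℝ => g p.1 p.2) {p : ℝ × ℝ | 2 * M < p.2})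
    (t r : ℝ) (hr : 2 * M < r) :
    HasDerivAt (fun s => g s r) (pdt g t r) t := by
  have hd : DifferentiableAt ℝ (fun p : ℝ × ℝ => g p.1 p.2) (t, r) :=
    (hg.contDiffAt ((isOpen_S' M).mem_nhds hr)).differentiableAt (by simp)
  have h := hd.hasFDerivAt.comp_hasDerivAt t
    ((hasDerivAt_id t).prodMk (hasDerivAt_const t r))
  have h2 : HasDerivAt (fun s => g s r) (fderiv ℝ (fun p : ℝ × ℝ => g p.1 p.2) (t, r) (1, 0)) t := h
  show HasDerivAt _ (deriv (fun s => g s r) t) t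
  rw [h2.deriv]; exact h2

private lemma hasDerivAt_pdr' (M : ℝ) (g : ℝ → ℝ → ℝ)
    (hg : ContDiffOn ℝ (⊤ : ℕ∞) (fun p : ℝ × ℝ => g p.1 p.2) {p : ℝ × ℝ | 2 * M < p.2})
    (t r : ℝ) (hr : 2 * M < r) :
    HasDerivAt (fun s => g t s) (pdr g t r) r := by
  have hd : DifferentiableAt ℝ (fun p : ℝ × ℝ => g p.1 p.2) (t, r) :=
    (hg.contDiffAt ((isOpen_S' M).mem_nhds hr)).differentiableAt (by simp)
  have h := hd.hasFDerivAt.comp_hasDerivAt r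
    ((hasDerivAt_const r t).prodMk (hasDerivAt_id r))
  have h2 : HasDerivAt (fun s => g t s) (fderiv ℝ (fun p : ℝ × ℝ => g p.1 p.2) (t, r) (0, 1)) r := h
  show HasDerivAt _ (deriv (fun s => g t s) r) r
  rw [h2.deriv]; exact h2

private lemma contDiffOn_pdt' (M : ℝ) (g : ℝ → ℝ → ℝ)
    (hg : ContDiffOn ℝ (⊤ : ℕ∞) (fun p : ℝ × ℝ => g p.1 p.2) {p : ℝ × ℝ | 2 * M < p.2}) :
    ContDiffOn ℝ (⊤ : ℕ∞) (fun p : ℝ × ℝ => pdt g p.1 p.2) {p : ℝ × ℝ | 2 * M < p.2} := by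
  have hF : ContDiffOn ℝ (⊤ : ℕ∞)
      (fun p : ℝ × ℝ => fderiv ℝ (fun q : ℝ × ℝ => g q.1 q.2) p (1, 0))
      {p : ℝ × ℝ | 2 * M < p.2} :=
    (hg.fderiv_of_isOpen (isOpen_S' M) (by simp)).clm_apply contDiffOn_const
  refine hF.congr ?_
  intro p hp
  have hd : DifferentiableAt ℝ (fun q : ℝ × ℝ => g q.1 q.2) p :=
    (hg.contDiffAt ((isOpen_S' M).mem_nhds hp)).differentiableAt (by simp)
  have h : HasDerivAt (fun s => g s p.2) (fderiv ℝ (fun q : ℝ × ℝ => g q.1 q.2) p (1, 0)) p.1 := by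
    have := hd.hasFDerivAt.comp_hasDerivAt p.1
      ((hasDerivAt_id p.1).prodMk (hasDerivAt_const p.1 p.2)); exact this
  exact h.deriv

private lemma contDiffOn_pdr' (M : ℝ) (g : ℝ → ℝ → ℝ)
    (hg : ContDiffOn ℝ (⊤ : ℕ∞) (fun p : ℝ × ℝ => g p.1 p.2) {p : ℝ × ℝ | 2 * M < p.2}) :
    ContDiffOn ℝ (⊤ : ℕ∞) (fun p : ℝ × ℝ => pdr g p.1 p.2) {p : ℝ × ℝ | 2 * M < p.2} := by
  have hF : ContDiffOn ℝ (⊤ : ℕ∞)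
      (fun p : ℝ × ℝ => fderiv ℝ (fun q : ℝ × ℝ => g q.1 q.2) p (0, 1))
      {p : ℝ × ℝ | 2 * M < p.2} :=
    (hg.fderiv_of_isOpen (isOpen_S' M) (by simp)).clm_apply contDiffOn_const
  refine hF.congr ?_
  intro p hp
  have hd : DifferentiableAt ℝ (fun q : ℝ × ℝ => g q.1 q.2) p :=
    (hg.contDiffAt ((isOpen_S' M).mem_nhds hp)).differentiableAt (by simp)
  have h : HasDerivAt (fun s => g p.1 s) (fderiv ℝ (fun q : ℝ × ℝ => g q.1 q.2) p (0, 1)) p.2 := by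
    have := hd.hasFDerivAt.comp_hasDerivAt p.2
      ((hasDerivAt_const p.2 p.1).prodMk (hasDerivAt_id p.2)); exact this
  exact h.deriv

private lemma alg' (M r pi lr P Pr Prr Ptt X0 Xr Yt Tt0 Ttr Trt : ℝ)
    (hr0 : r ≠ 0)
    (e1 : P = 2*r*Xr - 4*X0 - 2*r*Yt)
    (e3 : (lr-2)*X0 = (1-2*M/r)/2*(r*Pr+P) + 16*pi*r^3*Tt0)
    (e3d : (lr-2)*Xr = (2*M/r^2)/2*(r*Pr+P) + (1-2*M/r)/2*(Pr + (Pr + r*Prr))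
        + 16*pi*(3*r^2*Tt0 + r^3*Ttr))
    (e2d : 2*(1-2*M/r)*((lr-2)*Yt) = r*Ptt + 32*pi*(1-2*M/r)*r^3*Trt) :
    Ptt - (1-2*M/r)*((2*M/r^2)*Pr + (1-2*M/r)*Prr)
        + (1-2*M/r)/r^2*(lr - 3*(1-(1-2*M/r)))*P
      = 32*pi*r*(1-2*M/r)*((Tt0 + r*Ttr) - r*Trt) := by
  linear_combination (norm := skip) ((1-2*M/r)*(lr-2)/r^2) * e1 + (-4*(1-2*M/r)/r^2) * e3
    + (2*(1-2*M/r)/r) * e3d + (-1/r) * e2d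
  field_simp
  ring

/-- On the Schwarzschild exterior with `f(r) = 1 − 2M/r` and `L = l(l+1)`: if `Φ, X, Y`
satisfy `Φ = 2r ∂_r X − 4X − 2r ∂_t Y`, `(L−2)Y = (r/(2f)) ∂_t Φ + 16π r³ T_r`, and
`(L−2)X = (f/2)(r ∂_r Φ + Φ) + 16π r³ T_t`, then `Φ` satisfies the odd-parity master
equation with source `32π r f (∂_r(r T_t) − r ∂_t T_r)` on `{r > 2M}`. -/
theorem stmt_13 (M : ℝ) (hM : 0 < M) (f : ℝ → ℝ) (hf : ∀ r, f r = 1 - 2 * M / r)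
    (l : ℕ) (Φ X Y Tt Tr : ℝ → ℝ → ℝ)
    (hΦs : ContDiffOn ℝ (⊤ : ℕ∞) (fun p : ℝ × ℝ => Φ p.1 p.2) {p : ℝ × ℝ | 2 * M < p.2})
    (hXs : ContDiffOn ℝ (⊤ : ℕ∞) (fun p : ℝ × ℝ => X p.1 p.2) {p : ℝ × ℝ | 2 * M < p.2})
    (hYs : ContDiffOn ℝ (⊤ : ℕ∞) (fun p : ℝ × ℝ => Y p.1 p.2) {p : ℝ × ℝ | 2 * M < p.2})
    (hTt : ContDiffOn ℝ (⊤ : ℕ∞) (fun p : ℝ × ℝ => Tt p.1 p.2) {p : ℝ × ℝ | 2 * M < p.2})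
    (hTr : ContDiffOn ℝ (⊤ : ℕ∞) (fun p : ℝ × ℝ => Tr p.1 p.2) {p : ℝ × ℝ | 2 * M < p.2})
    (h1 : ∀ t r, 2 * M < r →
      Φ t r = 2 * r * pdr X t r - 4 * X t r - 2 * r * pdt Y t r)
    (h2 : ∀ t r, 2 * M < r →
      ((l : ℝ) * ((l : ℝ) + 1) - 2) * Y t r
        = r / (2 * f r) * pdt Φ t r + 16 * Real.pi * r ^ 3 * Tr t r)
    (h3 : ∀ t r, 2 * M < r →
      ((l : ℝ) * ((l : ℝ) + 1) - 2) * X t r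
        = f r / 2 * (r * pdr Φ t r + Φ t r) + 16 * Real.pi * r ^ 3 * Tt t r) :
    ∀ t r, 2 * M < r →
      pdt (pdt Φ) t r - f r * pdr (fun t r => f r * pdr Φ t r) t r
          + f r / r ^ 2 * ((l : ℝ) * ((l : ℝ) + 1) - 3 * (1 - f r)) * Φ t r
        = 32 * Real.pi * r * f r
            * (pdr (fun t s => s * Tt t s) t r - r * pdt Tr t r) := by
  intro t r hr
  have hrpos : 0 < r := lt_trans (by linarith) hr
  have hr0 : r ≠ 0 := ne_of_gt hrpos
  have hfr : f r ≠ 0 := by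
    rw [hf]
    have h : 2 * M / r < 1 := (div_lt_one hrpos).2 hr
    intro hcontra; rw [sub_eq_zero] at hcontra; linarith [hcontra]
  -- derivative of f
  have hfd : HasDerivAt f (2*M/r^2) r := by
    have h := ((hasDerivAt_const r (2*M)).div (hasDerivAt_id r) hr0).const_sub 1
    have hfe : f = fun x : ℝ => 1 - 2*M/x := funext hf
    rw [hfe, show (2*M/r^2 : ℝ) = -((0*r - 2*M*1)/r^2) by ring]
    exact h
  -- first partial derivatives
  have hΦr : HasDerivAt (fun s => Φ t s) (pdr Φ t r) r := hasDerivAt_pdr' M Φ hΦs t r hr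
  have hΦrr : HasDerivAt (fun s => pdr Φ t s) (pdr (pdr Φ) t r) r :=
    hasDerivAt_pdr' M (pdr Φ) (contDiffOn_pdr' M Φ hΦs) t r hr
  have hΦtt : HasDerivAt (fun s => pdt Φ s r) (pdt (pdt Φ) t r) t :=
    hasDerivAt_pdt' M (pdt Φ) (contDiffOn_pdt' M Φ hΦs) t r hr
  have hTtr : HasDerivAt (fun s => Tt t s) (pdr Tt t r) r := hasDerivAt_pdr' M Tt hTt t r hr
  have hTrt : HasDerivAt (fun s => Tr s r) (pdt Tr t r) t := hasDerivAt_pdt' M Tr hTr t r hr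
  set lr : ℝ := (l : ℝ) * ((l : ℝ) + 1) with hlr
  -- e2d : t-derivative of h2 (multiplied by 2 f r)
  have e2d : 2*(1-2*M/r)*((lr-2)*pdt Y t r)
      = r*pdt (pdt Φ) t r + 32*Real.pi*(1-2*M/r)*r^3*pdt Tr t r := by
    have hL : HasDerivAt (fun s => 2*f r*((lr-2)*Y s r)) (2*f r*((lr-2)*pdt Y t r)) t :=
      ((hasDerivAt_pdt' M Y hYs t r hr).const_mul (lr-2)).const_mul (2*f r)
    have heq : (fun s => 2*f r*((lr-2)*Y s r))
        = (fun s => r * pdt Φ s r + 32*Real.pi*f r*r^3 * Tr s r) := by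
      funext s
      have h := h2 s r hr
      field_simp [hfr] at h ⊢
      linear_combination h
    have hR : HasDerivAt (fun s => r * pdt Φ s r + 32*Real.pi*f r*r^3 * Tr s r)
        (r * pdt (pdt Φ) t r + 32*Real.pi*f r*r^3 * pdt Tr t r) t :=
      (hΦtt.const_mul r).add (hTrt.const_mul (32*Real.pi*f r*r^3))
    have hL2 : HasDerivAt (fun s => 2*f r*((lr-2)*Y s r))
        (r * pdt (pdt Φ) t r + 32*Real.pi*f r*r^3 * pdt Tr t r) t := by
      rw [heq]; exact hR
    have raw := hL.unique hL2
    rw [hf] at raw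
    linear_combination raw
  -- e3d : r-derivative of h3
  have e3d : (lr-2)*pdr X t r
      = (2*M/r^2)/2*(r*pdr Φ t r + Φ t r)
        + (1-2*M/r)/2*(pdr Φ t r + (pdr Φ t r + r*pdr (pdr Φ) t r))
        + 16*Real.pi*(3*r^2*Tt t r + r^3*pdr Tt t r) := by
    have hL : HasDerivAt (fun s => (lr-2)*X t s) ((lr-2)*pdr X t r) r :=
      (hasDerivAt_pdr' M X hXs t r hr).const_mul (lr-2)
    have hin : HasDerivAt (fun s : ℝ => s * pdr Φ t s + Φ t s)
        (1*pdr Φ t r + r*pdr (pdr Φ) t r + pdr Φ t r) r :=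
      ((hasDerivAt_id r).mul hΦrr).add hΦr
    have hterm1 : HasDerivAt (fun s => f s/2 * (s*pdr Φ t s + Φ t s))
        ((2*M/r^2)/2*(r*pdr Φ t r + Φ t r)
          + f r/2*(1*pdr Φ t r + r*pdr (pdr Φ) t r + pdr Φ t r)) r :=
      (hfd.div_const 2).mul hin
    have hp : HasDerivAt (fun s : ℝ => 16*Real.pi*s^3) (16*Real.pi*(3*r^2)) r := by
      simpa using (hasDerivAt_pow 3 r).const_mul (16*Real.pi)
    have hterm2 : HasDerivAt (fun s : ℝ => 16*Real.pi*s^3 * Tt t s)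
        (16*Real.pi*(3*r^2)*Tt t r + 16*Real.pi*r^3*pdr Tt t r) r := hp.mul hTtr
    have hR := hterm1.add hterm2
    have hev : (fun s => (lr-2)*X t s)
        =ᶠ[nhds r] (fun s => f s/2*(s*pdr Φ t s + Φ t s) + 16*Real.pi*s^3*Tt t s) :=
      Filter.eventuallyEq_of_mem (Ioi_mem_nhds hr) (fun s hs => h3 t s hs)
    have raw := hL.unique (hR.congr_of_eventuallyEq hev)
    rw [hf] at raw
    linear_combination raw
  -- assemble
  have e1 := h1 t r hr
  have e3 := h3 t r hr
  rw [hf] at e3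
  have hB : pdr (fun t r => f r * pdr Φ t r) t r
      = 2*M/r^2 * pdr Φ t r + f r * pdr (pdr Φ) t r := (hfd.mul hΦrr).deriv
  have hC : pdr (fun t s => s * Tt t s) t r = 1 * Tt t r + r * pdr Tt t r :=
    ((hasDerivAt_id r).mul hTtr).deriv
  rw [hB, hC, hf]
  linear_combination alg' M r Real.pi lr (Φ t r) (pdr Φ t r) (pdr (pdr Φ) t r)
    (pdt (pdt Φ) t r) (X t r) (pdr X t r) (pdt Y t r) (Tt t r) (pdr Tt t r) (pdt Tr t r)
    hr0 e1 e3 e3d e2d
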